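/- Let (Ω, 𝓕, P) be a probability space and let (ε_k)_{k∈ℕ} be an independent family of square-integrable real random variables, each with mean 0 and variance 1. Let φ, ρ ∈ ℝ with |φ| < 1 and |ρ| < 1. Define the red-noise process v : ℕ → Ω → ℝ by v_0 = 0 and v_{t+1} = ρ·v_t + ε_t, and the state process x : ℕ → Ω → ℝ by x_0 = 0 and x_{t+1} = φ·x_t + v_t. Then the lag-1 autocorrelation Cov(x_{t+1}, x_t)/Var(x_t) converges to (φ + ρ)/(1 + φρ) as t → ∞. -/

import Mathlib

/-! Unrolling the recursions writes `v t` and `x t` as linear combinations of the innovations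
`ε 0, …, ε (t - 1)`. The innovations are orthonormal in `L²`, so covariances of such combinations
are dot products of their coefficient vectors `b t`, `a t`. The three moments
`Var v_t = ‖b t‖²`, `Cov(x_t, v_t) = ⟪a t, b t⟫`, `Var x_t = ‖a t‖²` satisfy scalar affine
recursions with contraction factors `ρ²`, `φρ`, `φ²`, hence converge to
`1 / (1 - ρ²)`, `ρ / ((1 - ρ²)(1 - φρ))` and `(1 + φρ) / ((1 - ρ²)(1 - φρ)(1 - φ²))`.
Finally `Cov(x_{t+1}, x_t) = φ Var x_t + Cov(x_t, v_t)`, and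
`φ + ρ (1 - φ²) / (1 + φρ) = (φ + ρ) / (1 + φρ)`. -/

open MeasureTheory ProbabilityTheory Filter

/-- The covariance `Cov(X, Y) = E[(X - E X)(Y - E Y)]` of two real random variables. -/
noncomputable def cov {Ω : Type*} [MeasureSpace Ω] (X Y : Ω → ℝ) : ℝ :=
  ∫ ω, (X ω - ∫ ω', X ω' ∂(ℙ : Measure Ω)) * (Y ω - ∫ ω', Y ω' ∂(ℙ : Measure Ω)) ∂(ℙ : Measure Ω)

open Topology Finset

theorem tendsto_zero_of_le_mul_add {c : ℝ} (hc₀ : 0 ≤ c) (hc₁ : c < 1) {d r : ℕ → ℝ}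
    (hd : ∀ t, 0 ≤ d t) (hr : Tendsto r atTop (𝓝 0))
    (hdr : ∀ t, d (t + 1) ≤ c * d t + r t) :
    Tendsto d atTop (𝓝 0) := by
  refine tendsto_order.2 ⟨fun a ha => .of_forall fun t => ha.trans_le (hd t), fun δ hδ => ?_⟩
  obtain ⟨N, hN⟩ := eventually_atTop.1
    ((tendsto_order.1 hr).2 ((1 - c) * (δ / 2)) (by nlinarith))
  -- beyond `N`, the excess of `d` over `δ / 2` contracts by the factor `c`
  have hgeom : ∀ m, d (m + N) - δ / 2 ≤ c ^ m * (d N - δ / 2) := by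
    intro m
    induction m with
    | zero => simp
    | succ m ih =>
      have hstep := hdr (m + N)
      have hrN := hN (m + N) (Nat.le_add_left N m)
      have hih := mul_le_mul_of_nonneg_left ih hc₀
      rw [add_right_comm, pow_succ]
      nlinarith
  have hlim : Tendsto (fun m => δ / 2 + c ^ m * (d N - δ / 2)) atTop (𝓝 (δ / 2)) := by
    simpa using tendsto_const_nhds.add
      ((tendsto_pow_atTop_nhds_zero_of_lt_one hc₀ hc₁).mul_const (d N - δ / 2))
  obtain ⟨M, hM⟩ := eventually_atTop.1 ((tendsto_order.1 hlim).2 δ (by linarith))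
  refine eventually_atTop.2 ⟨M + N, fun t ht => ?_⟩
  obtain ⟨m, rfl⟩ : ∃ m, t = m + N := ⟨t - N, by omega⟩
  linarith [hgeom m, hM m (by omega)]

theorem tendsto_of_linear_recurrence {q L : ℝ} (hq : |q| < 1) {u w : ℕ → ℝ}
    (hw : Tendsto w atTop (𝓝 L)) (hu : ∀ t, u (t + 1) = q * u t + w t) :
    Tendsto u atTop (𝓝 (L / (1 - q))) := by
  have hq₁ : 1 - q ≠ 0 := by linarith [(abs_lt.1 hq).2]
  have hfix : L / (1 - q) = q * (L / (1 - q)) + L := by field_simp; ring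
  have herr : ∀ t, |u (t + 1) - L / (1 - q)| ≤ |q| * |u t - L / (1 - q)| + |w t - L| :=
    fun t => by
      rw [← abs_mul]
      calc |u (t + 1) - L / (1 - q)| = |q * (u t - L / (1 - q)) + (w t - L)| := by
            congr 1; rw [hu t]; linarith
        _ ≤ _ := abs_add_le _ _
  have hr : Tendsto (fun t => |w t - L|) atTop (𝓝 0) := by
    simpa using (hw.sub_const L).abs
  have := tendsto_zero_of_le_mul_add (d := fun t => |u t - L / (1 - q)|) (abs_nonneg q) hq
    (fun t => abs_nonneg _) hr herr
  simpa using ((tendsto_zero_iff_abs_tendsto_zero _).2 this).add_const (L / (1 - q))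

theorem ProbabilityTheory.iIndepFun.integral_mul_eq_ite {Ω ι : Type*} [MeasurableSpace Ω]
    [DecidableEq ι] {μ : Measure Ω} [IsProbabilityMeasure μ] {ε : ι → Ω → ℝ}
    (hindep : iIndepFun ε μ)
    (hL2 : ∀ k, MemLp (ε k) 2 μ) (hmean : ∀ k, ∫ ω, ε k ω ∂μ = 0)
    (hvar : ∀ k, variance (ε k) μ = 1) (i j : ι) :
    ∫ ω, ε i ω * ε j ω ∂μ = if i = j then 1 else 0 := by
  split_ifs with h
  · subst h
    have := variance_eq_sub (hL2 i)
    simp only [hvar, hmean, Pi.pow_apply] at this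
    simpa [sq] using this.symm
  · have := (hindep.indepFun h).integral_mul_eq_mul_integral
      (hL2 i).aestronglyMeasurable (hL2 j).aestronglyMeasurable
    simpa [hmean] using this

theorem const_mul_sum_add_sum {Ω ι : Type*} (ε : ι → Ω → ℝ) (c : ℝ) (s : Finset ι)
    (f g : ι → ℝ) :
    (fun ω => c * ∑ k ∈ s, f k * ε k ω + ∑ k ∈ s, g k * ε k ω)
      = fun ω => ∑ k ∈ s, (c * f k + g k) * ε k ω := by
  funext ω
  simp only [mul_sum, ← sum_add_distrib, add_mul, mul_assoc]

theorem cov_sum_mul_sum {Ω ι : Type*} [MeasureSpace Ω] [IsFiniteMeasure (ℙ : Measure Ω)]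
    [DecidableEq ι] {ε : ι → Ω → ℝ}
    (hL2 : ∀ k, MemLp (ε k) 2 ℙ) (hmean : ∀ k, ∫ ω, ε k ω = 0)
    (horth : ∀ i j, ∫ ω, ε i ω * ε j ω = if i = j then 1 else 0) (s : Finset ι)
    (a b : ι → ℝ) :
    cov (fun ω => ∑ k ∈ s, a k * ε k ω) (fun ω => ∑ k ∈ s, b k * ε k ω)
      = ∑ k ∈ s, a k * b k := by
  have hcentered : ∀ c : ι → ℝ, ∫ ω, ∑ k ∈ s, c k * ε k ω = 0 := fun c => by
    rw [integral_finsetSum _ fun k _ => ((hL2 k).integrable one_le_two).const_mul (c k)]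
    simp [integral_const_mul, hmean]
  have hexpand : ∀ ω, (∑ i ∈ s, a i * ε i ω) * (∑ j ∈ s, b j * ε j ω)
      = ∑ i ∈ s, ∑ j ∈ s, a i * b j * (ε i ω * ε j ω) := fun ω => by
    rw [sum_mul_sum]; exact sum_congr rfl fun i _ => sum_congr rfl fun j _ => by ring
  have hint : ∀ i j, Integrable (fun ω => a i * b j * (ε i ω * ε j ω)) := fun i j =>
    ((hL2 i).integrable_mul (hL2 j)).const_mul _
  simp only [cov, hcentered, sub_zero, hexpand]
  rw [integral_finsetSum _ fun i _ => integrable_finsetSum _ fun j _ => hint i j]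
  refine sum_congr rfl fun i hi => ?_
  simp [integral_finsetSum _ fun j _ => hint i j, integral_const_mul, horth, hi]

namespace RedNoise

/- The weights of `ε k` in `v t` and in `x t`; in closed form `noiseCoeff ρ t k = ρ ^ (t - 1 - k)`
for `k < t`. -/
noncomputable def noiseCoeff (ρ : ℝ) : ℕ → ℕ → ℝ
  | 0, _ => 0
  | t + 1, k => ρ * noiseCoeff ρ t k + if k = t then 1 else 0

noncomputable def stateCoeff (φ ρ : ℝ) : ℕ → ℕ → ℝ
  | 0, _ => 0
  | t + 1, k => φ * stateCoeff φ ρ t k + noiseCoeff ρ t k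

variable {φ ρ : ℝ}

theorem noiseCoeff_eq_zero_of_le {t k : ℕ} (h : t ≤ k) : noiseCoeff ρ t k = 0 := by
  induction t with
  | zero => rfl
  | succ t ih => simp [noiseCoeff, ih (by omega), show k ≠ t by omega]

theorem stateCoeff_eq_zero_of_le {t k : ℕ} (h : t ≤ k) : stateCoeff φ ρ t k = 0 := by
  induction t with
  | zero => rfl
  | succ t ih => simp [stateCoeff, ih (by omega), noiseCoeff_eq_zero_of_le (by omega : t ≤ k)]

theorem noiseCoeff_succ_of_lt {t k : ℕ} (h : k < t) :
    noiseCoeff ρ (t + 1) k = ρ * noiseCoeff ρ t k := by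
  simp [noiseCoeff, h.ne]

theorem noiseCoeff_succ_self (t : ℕ) : noiseCoeff ρ (t + 1) t = 1 := by
  simp [noiseCoeff, noiseCoeff_eq_zero_of_le le_rfl]

theorem stateCoeff_succ (t k : ℕ) :
    stateCoeff φ ρ (t + 1) k = φ * stateCoeff φ ρ t k + noiseCoeff ρ t k := rfl

theorem stateCoeff_succ_self (t : ℕ) : stateCoeff φ ρ (t + 1) t = 0 := by
  simp [stateCoeff, stateCoeff_eq_zero_of_le le_rfl, noiseCoeff_eq_zero_of_le le_rfl]

theorem eq_sum_noiseCoeff {Ω : Type*} {ε v : ℕ → Ω → ℝ} (hv0 : v 0 = fun _ => 0)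
    (hvrec : ∀ t, v (t + 1) = fun ω => ρ * v t ω + ε t ω) (t : ℕ) :
    v t = fun ω => ∑ k ∈ range t, noiseCoeff ρ t k * ε k ω := by
  induction t with
  | zero => simp [hv0]
  | succ t ih =>
    rw [hvrec, ih]
    funext ω
    dsimp only
    rw [sum_range_succ, noiseCoeff_succ_self, one_mul, mul_sum]
    congr 1
    exact sum_congr rfl fun k hk => by rw [noiseCoeff_succ_of_lt (mem_range.1 hk), mul_assoc]

theorem eq_sum_stateCoeff {Ω : Type*} {ε v x : ℕ → Ω → ℝ}
    (hv : ∀ t, v t = fun ω => ∑ k ∈ range t, noiseCoeff ρ t k * ε k ω)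
    (hx0 : x 0 = fun _ => 0) (hxrec : ∀ t, x (t + 1) = fun ω => φ * x t ω + v t ω) (t : ℕ) :
    x t = fun ω => ∑ k ∈ range t, stateCoeff φ ρ t k * ε k ω := by
  induction t with
  | zero => simp [hx0]
  | succ t ih =>
    rw [hxrec, ih, hv, const_mul_sum_add_sum]
    funext ω
    rw [sum_range_succ, stateCoeff_succ_self, zero_mul, add_zero]
    rfl

noncomputable def noiseVar (ρ : ℝ) (t : ℕ) : ℝ :=
  ∑ k ∈ range t, noiseCoeff ρ t k * noiseCoeff ρ t k

noncomputable def stateNoiseCov (φ ρ : ℝ) (t : ℕ) : ℝ :=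
  ∑ k ∈ range t, stateCoeff φ ρ t k * noiseCoeff ρ t k

noncomputable def stateVar (φ ρ : ℝ) (t : ℕ) : ℝ :=
  ∑ k ∈ range t, stateCoeff φ ρ t k * stateCoeff φ ρ t k

theorem noiseVar_succ (t : ℕ) : noiseVar ρ (t + 1) = ρ ^ 2 * noiseVar ρ t + 1 := by
  rw [noiseVar, noiseVar, sum_range_succ, noiseCoeff_succ_self, mul_one, mul_sum]
  congr 1
  exact sum_congr rfl fun k hk => by rw [noiseCoeff_succ_of_lt (mem_range.1 hk)]; ring

theorem stateNoiseCov_succ (t : ℕ) :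
    stateNoiseCov φ ρ (t + 1) = φ * ρ * stateNoiseCov φ ρ t + ρ * noiseVar ρ t := by
  rw [stateNoiseCov, stateNoiseCov, noiseVar, sum_range_succ, stateCoeff_succ_self, zero_mul,
    add_zero, mul_sum, mul_sum, ← sum_add_distrib]
  exact sum_congr rfl fun k hk => by
    rw [noiseCoeff_succ_of_lt (mem_range.1 hk), stateCoeff_succ]; ring

theorem stateVar_succ (t : ℕ) :
    stateVar φ ρ (t + 1)
      = φ ^ 2 * stateVar φ ρ t + (2 * φ * stateNoiseCov φ ρ t + noiseVar ρ t) := by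
  rw [stateVar, stateVar, stateNoiseCov, noiseVar, sum_range_succ, stateCoeff_succ_self, zero_mul,
    add_zero, mul_sum, mul_sum, ← sum_add_distrib, ← sum_add_distrib]
  exact sum_congr rfl fun k _ => by rw [stateCoeff_succ]; ring

theorem tendsto_noiseVar (hρ : |ρ| < 1) :
    Tendsto (noiseVar ρ) atTop (𝓝 (1 / (1 - ρ ^ 2))) :=
  tendsto_of_linear_recurrence (by rwa [abs_sq, sq_lt_one_iff_abs_lt_one])
    tendsto_const_nhds noiseVar_succ

theorem tendsto_stateNoiseCov (hφ : |φ| < 1) (hρ : |ρ| < 1) :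
    Tendsto (stateNoiseCov φ ρ) atTop (𝓝 (ρ / ((1 - ρ ^ 2) * (1 - φ * ρ)))) := by
  have hφρ : |φ * ρ| < 1 := by
    rw [abs_mul]; exact mul_lt_one_of_nonneg_of_lt_one_left (abs_nonneg φ) hφ hρ.le
  convert tendsto_of_linear_recurrence hφρ ((tendsto_noiseVar hρ).const_mul ρ)
    stateNoiseCov_succ using 2
  rw [mul_one_div, div_div]

theorem tendsto_stateVar (hφ : |φ| < 1) (hρ : |ρ| < 1) :
    Tendsto (stateVar φ ρ) atTop
      (𝓝 ((1 + φ * ρ) / ((1 - ρ ^ 2) * (1 - φ * ρ) * (1 - φ ^ 2)))) := by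
  have hφ₂ : 1 - φ ^ 2 ≠ 0 := by nlinarith [abs_lt.1 hφ]
  have hρ₂ : 1 - ρ ^ 2 ≠ 0 := by nlinarith [abs_lt.1 hρ]
  have hφρ : 1 - φ * ρ ≠ 0 := by nlinarith [abs_lt.1 hφ, abs_lt.1 hρ]
  convert tendsto_of_linear_recurrence (by rwa [abs_sq, sq_lt_one_iff_abs_lt_one])
    (((tendsto_stateNoiseCov hφ hρ).const_mul (2 * φ)).add (tendsto_noiseVar hρ))
    stateVar_succ using 2
  field_simp
  ring

end RedNoise

/-- For the state process `x_{t+1} = φ x_t + v_t`, `x_0 = 0`, driven by red noise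
`v_{t+1} = ρ v_t + ε_t`, `v_0 = 0`, where the `ε_t` are independent with mean 0 and
variance 1, and `|φ| < 1`, `|ρ| < 1`, the lag-1 autocorrelation
`Cov(x_{t+1}, x_t)/Var(x_t)` converges to `φ_b = (φ + ρ)/(1 + φρ)` as `t → ∞`. -/
theorem red_noise_lag1_autocorrelation {Ω : Type*} [MeasureSpace Ω]
    [IsProbabilityMeasure (ℙ : Measure Ω)]
    (ε : ℕ → Ω → ℝ)
    (hindep : iIndepFun ε ℙ)
    (hL2 : ∀ k, MemLp (ε k) 2 ℙ)
    (hmean : ∀ k, ∫ ω, ε k ω ∂ℙ = 0)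
    (hvar : ∀ k, variance (ε k) ℙ = 1)
    (φ ρ : ℝ) (hφ : |φ| < 1) (hρ : |ρ| < 1)
    (v : ℕ → Ω → ℝ) (hv0 : v 0 = fun _ => 0)
    (hvrec : ∀ t, v (t + 1) = fun ω => ρ * v t ω + ε t ω)
    (x : ℕ → Ω → ℝ) (hx0 : x 0 = fun _ => 0)
    (hxrec : ∀ t, x (t + 1) = fun ω => φ * x t ω + v t ω) :
    Tendsto (fun t : ℕ => cov (x (t + 1)) (x t) / cov (x t) (x t))
      atTop (nhds ((φ + ρ) / (1 + φ * ρ))) := by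
  have horth := hindep.integral_mul_eq_ite hL2 hmean hvar
  have hv := RedNoise.eq_sum_noiseCoeff hv0 hvrec
  have hx := RedNoise.eq_sum_stateCoeff hv hx0 hxrec
  have hvar_x : ∀ t, cov (x t) (x t) = RedNoise.stateVar φ ρ t := fun t => by
    rw [hx]; exact cov_sum_mul_sum hL2 hmean horth _ _ _
  have hcov_x : ∀ t, cov (x (t + 1)) (x t)
      = φ * RedNoise.stateVar φ ρ t + RedNoise.stateNoiseCov φ ρ t := fun t => by
    rw [hxrec, hx, hv, const_mul_sum_add_sum, cov_sum_mul_sum hL2 hmean horth,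
      RedNoise.stateVar, RedNoise.stateNoiseCov, mul_sum, ← sum_add_distrib]
    exact sum_congr rfl fun k _ => by ring
  obtain ⟨hφ₁, hφ₂⟩ := abs_lt.1 hφ
  obtain ⟨hρ₁, hρ₂⟩ := abs_lt.1 hρ
  have hρsq : 0 < 1 - ρ ^ 2 := by nlinarith
  have hφρ_lt : 0 < 1 - φ * ρ := by nlinarith
  have hφsq : 0 < 1 - φ ^ 2 := by nlinarith
  have hφρ_gt : 0 < 1 + φ * ρ := by nlinarith
  have hlim := RedNoise.tendsto_stateVar hφ hρ
  convert ((hlim.const_mul φ).add (RedNoise.tendsto_stateNoiseCov hφ hρ)).div hlim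
    (by positivity) using 2 with t
  · rw [hcov_x, hvar_x]
    rfl
  · field_simp
    ring
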